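/- arXiv:1105.0288 — 3 statements merged into one kernel-verified Lean document; each statement's English description precedes it below -/
import Mathlib

section
/- Let U be a set of predicate symbols and M, N be nonempty sets of interpretations such that M is saturated relative to U and N is saturated relative to the complement Uᶜ of U. Then M ∩ N is nonempty, is semi-saturated relative to U, coincides with M on U (i.e. (M ∩ N)|U = M|U), and coincides with N on Uᶜ (i.e. (M ∩ N)|Uᶜ = N|Uᶜ). -/
/-! For `I ∈ M` and `J ∈ N`, the interpretation that agrees with `I` on `U` and with `J` on `Uᶜ`
lies in `M` by saturation of `M` and in `N` by saturation of `N`. Such splices witness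
nonemptiness and both equalities of restrictions; semi-saturation only needs
`(M ∩ N)|V ⊆ M|V, N|V`. -/

open Set

variable {A P : Type*}

/-- Restriction of an interpretation (set of atoms) to the predicate symbols in `U`. -/
def restr (pred : A → P) (U : Set P) (I : Set A) : Set A :=
  {p | p ∈ I ∧ pred p ∈ U}

/-- Restriction of a set of interpretations to the predicate symbols in `U`. -/
def restrM (pred : A → P) (U : Set P) (M : Set (Set A)) : Set (Set A) :=
  restr pred U '' M

/-- `M` is saturated relative to `U`. -/
def saturated (pred : A → P) (U : Set P) (M : Set (Set A)) : Prop :=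
  ∀ I : Set A, restr pred U I ∈ restrM pred U M → I ∈ M

/-- `σ_U(M)`: the set of all interpretations `I` with `I|U ∈ M|U`. -/
def sigmaSet (pred : A → P) (U : Set P) (M : Set (Set A)) : Set (Set A) :=
  {I | restr pred U I ∈ restrM pred U M}

/-- `M` is semi-saturated relative to `U`. -/
def semiSaturated (pred : A → P) (U : Set P) (M : Set (Set A)) : Prop :=
  ∀ I : Set A, restr pred U I ∈ restrM pred U M →
    restr pred Uᶜ I ∈ restrM pred Uᶜ M → I ∈ M

/-- `M` is sequence-saturated relative to the family `S`. -/
def seqSaturated {ι : Type*} (pred : A → P) (S : ι → Set P) (M : Set (Set A)) : Prop :=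
  ∀ I : Set A, (∀ α, restr pred (S α) I ∈ restrM pred (S α) M) → I ∈ M

/-- The difference in the interpretation of predicate symbol `Q` between `I` and `J`. -/
def diffP (pred : A → P) (Q : P) (I J : Set A) : Set A :=
  {p | p ∈ symmDiff I J ∧ pred p = Q}

/-- `J ≤_I J'` : `J` is at least as close to `I` as `J'`. -/
def closerLE (pred : A → P) (I J J' : Set A) : Prop :=
  ∀ Q : P, diffP pred Q I J ⊆ diffP pred Q I J'

/-- `J <_I J'` : `J` is closer to `I` than `J'`. -/
def closerLT (pred : A → P) (I J J' : Set A) : Prop :=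
  closerLE pred I J J' ∧ ¬ closerLE pred I J' J

/-- `I ⊕ N` for an interpretation `I` and a set of interpretations `N`. -/
def oplusI (pred : A → P) (I : Set A) (N : Set (Set A)) : Set (Set A) :=
  {J | J ∈ N ∧ ¬ ∃ J' ∈ N, closerLT pred I J' J}

/-- `M ⊕ N` for sets of interpretations `M`, `N`. -/
def oplus (pred : A → P) (M N : Set (Set A)) : Set (Set A) :=
  ⋃ I ∈ M, oplusI pred I N

def splice (pred : A → P) (U : Set P) (I J : Set A) : Set A :=
  restr pred U I ∪ restr pred Uᶜ J

variable {pred : A → P} {U : Set P} {M N : Set (Set A)}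

@[simp]
lemma restr_splice (I J : Set A) : restr pred U (splice pred U I J) = restr pred U I := by
  ext p
  simp only [splice, restr, mem_union, mem_compl_iff, mem_ofPred_eq]
  tauto

@[simp]
lemma restr_compl_splice (I J : Set A) :
    restr pred Uᶜ (splice pred U I J) = restr pred Uᶜ J := by
  ext p
  simp only [splice, restr, mem_union, mem_compl_iff, mem_ofPred_eq]
  tauto

lemma restrM_mono {M M' : Set (Set A)} (h : M ⊆ M') : restrM pred U M ⊆ restrM pred U M' :=
  image_mono h

lemma saturated.splice_mem (hM : saturated pred U M) {I : Set A} (hI : I ∈ M) (J : Set A) :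
    splice pred U I J ∈ M :=
  hM _ ⟨I, hI, restr_splice I J |>.symm⟩

lemma saturated.splice_mem_of_compl (hN : saturated pred Uᶜ N) (I : Set A) {J : Set A}
    (hJ : J ∈ N) : splice pred U I J ∈ N :=
  hN _ ⟨J, hJ, restr_compl_splice I J |>.symm⟩

lemma splice_mem_inter (hM : saturated pred U M) (hN : saturated pred Uᶜ N) {I J : Set A}
    (hI : I ∈ M) (hJ : J ∈ N) : splice pred U I J ∈ M ∩ N :=
  ⟨hM.splice_mem hI J, hN.splice_mem_of_compl I hJ⟩

lemma semiSaturated_inter (hM : saturated pred U M) (hN : saturated pred Uᶜ N) :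
    semiSaturated pred U (M ∩ N) := fun I hU hUc =>
  ⟨hM I (restrM_mono inter_subset_left hU), hN I (restrM_mono inter_subset_right hUc)⟩

lemma restrM_inter_of_saturated (hM : saturated pred U M) (hN : saturated pred Uᶜ N)
    (hNne : N.Nonempty) : restrM pred U (M ∩ N) = restrM pred U M := by
  refine (restrM_mono inter_subset_left).antisymm ?_
  rintro _ ⟨I, hI, rfl⟩
  obtain ⟨J, hJ⟩ := hNne
  exact ⟨_, splice_mem_inter hM hN hI hJ, restr_splice I J⟩

lemma restrM_compl_inter_of_saturated (hM : saturated pred U M) (hN : saturated pred Uᶜ N)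
    (hMne : M.Nonempty) : restrM pred Uᶜ (M ∩ N) = restrM pred Uᶜ N := by
  refine (restrM_mono inter_subset_right).antisymm ?_
  rintro _ ⟨J, hJ, rfl⟩
  obtain ⟨I, hI⟩ := hMne
  exact ⟨_, splice_mem_inter hM hN hI hJ, restr_compl_splice I J⟩

theorem stmt_9 (pred : A → P) (U : Set P) (M N : Set (Set A))
    (hMne : M.Nonempty) (hNne : N.Nonempty)
    (hM : saturated pred U M) (hN : saturated pred Uᶜ N) :
    (M ∩ N).Nonempty ∧ semiSaturated pred U (M ∩ N) ∧
    restrM pred U (M ∩ N) = restrM pred U M ∧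
    restrM pred Uᶜ (M ∩ N) = restrM pred Uᶜ N :=
  ⟨hMne.elim fun _ hI => hNne.elim fun _ hJ => ⟨_, splice_mem_inter hM hN hI hJ⟩,
    semiSaturated_inter hM hN, restrM_inter_of_saturated hM hN hNne,
    restrM_compl_inter_of_saturated hM hN hMne⟩
end

section
/- Let S = (S_α) be a saturation sequence and M be a set of interpretations. The following conditions are equivalent: (1) M is sequence-saturated relative to S; (2) M = ⋂_α σ_{S_α}(M); (3) M = ⋂_α X_α for some family (X_α) of sets of interpretations such that for every α, X_α is saturated relative to S_α. -/
open Set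

variable {A P : Type*}

section Saturation

variable {ι : Type*} {pred : A → P} {U : Set P} {S : ι → Set P} {M N : Set (Set A)}

theorem subset_sigmaSet : M ⊆ sigmaSet pred U M :=
  fun I hI => ⟨I, hI, rfl⟩

theorem sigmaSet_mono (h : M ⊆ N) : sigmaSet pred U M ⊆ sigmaSet pred U N :=
  fun _ ⟨J, hJ, hJI⟩ => ⟨J, h hJ, hJI⟩

theorem saturated_sigmaSet : saturated pred U (sigmaSet pred U M) := by
  rintro I ⟨J, ⟨K, hK, hKJ⟩, hJI⟩
  exact ⟨K, hK, hKJ.trans hJI⟩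

theorem seqSaturated_iff_iInter_sigmaSet_subset :
    seqSaturated pred S M ↔ ⋂ α, sigmaSet pred (S α) M ⊆ M := by
  simp only [seqSaturated, Set.subset_def, Set.mem_iInter]
  rfl

theorem seqSaturated_iff_eq_iInter_sigmaSet :
    seqSaturated pred S M ↔ M = ⋂ α, sigmaSet pred (S α) M := by
  rw [seqSaturated_iff_iInter_sigmaSet_subset]
  exact ⟨fun h => h.antisymm' (Set.subset_iInter fun _ => subset_sigmaSet), fun h => h.superset⟩

theorem seqSaturated_iff_exists_saturated_iInter_eq :
    seqSaturated pred S M ↔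
      ∃ X : ι → Set (Set A), (∀ α, saturated pred (S α) (X α)) ∧ M = ⋂ α, X α := by
  refine ⟨fun h => ⟨_, fun _ => saturated_sigmaSet, seqSaturated_iff_eq_iInter_sigmaSet.1 h⟩, ?_⟩
  rintro ⟨X, hX, rfl⟩
  refine seqSaturated_iff_iInter_sigmaSet_subset.2 (Set.iInter_mono fun α => ?_)
  -- `saturated U X` unfolds to `σ_U(X) ⊆ X`, so a saturated `X_α ⊇ M` contains `σ_{S_α}(M)`.
  exact (sigmaSet_mono (Set.iInter_subset X α)).trans (hX α)

end Saturation

theorem stmt_13_general {ι : Type*} (pred : A → P) (S : ι → Set P)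
    (M : Set (Set A)) :
    (seqSaturated pred S M ↔ M = ⋂ α, sigmaSet pred (S α) M) ∧
    (seqSaturated pred S M ↔
      ∃ X : ι → Set (Set A),
        (∀ α, saturated pred (S α) (X α)) ∧ M = ⋂ α, X α) :=
  ⟨seqSaturated_iff_eq_iInter_sigmaSet, seqSaturated_iff_exists_saturated_iInter_eq⟩

theorem stmt_13 {ι : Type*} (pred : A → P) (S : ι → Set P)
    (hdisj : Pairwise (Function.onFun Disjoint S)) (hcov : ⋃ α, S α = Set.univ)
    (M : Set (Set A)) :
    (seqSaturated pred S M ↔ M = ⋂ α, sigmaSet pred (S α) M) ∧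
    (seqSaturated pred S M ↔
      ∃ X : ι → Set (Set A),
        (∀ α, saturated pred (S α) (X α)) ∧ M = ⋂ α, X α) :=
  stmt_13_general pred S M
end

section
/- Let S = (S_α) be a saturation sequence and M, N be sets of interpretations that are both sequence-saturated relative to S. If M ⊕ N is nonempty, then for every α, σ_{S_α}(M ⊕ N) = σ_{S_α}(M) ⊕ σ_{S_α}(N). -/
/-!
The order `≤_I` compares interpretations one predicate symbol at a time, so relative to
`U = S α` it splits into a `U`-part and a `Uᶜ`-part, each depending only on the restrictions of
the three interpretations to that part. Since the `S β` are disjoint, a sequence-saturated set is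
closed under gluing the `U`-part of one member to the `Uᶜ`-part of another. Hence a strictly
closer competitor on one side of the equation can be glued into one on the other side; the
predicate symbol at which it is strictly closer decides whether the comparison is carried over
on `U` or on `Uᶜ`. In `σ_U(M) ⊕ σ_U(N) ⊆ σ_U(M ⊕ N)` the `Uᶜ`-part of the witness is taken from
an element of `M ⊕ N`, which is where nonemptiness enters.
-/

open Set

variable {A P : Type*}

def glue (pred : A → P) (U : Set P) (L K : Set A) : Set A :=
  restr pred U L ∪ restr pred Uᶜ K

section

variable {pred : A → P} {U V : Set P}

lemma mem_iff_of_restr_eq {I J : Set A} (h : restr pred V I = restr pred V J) {p : A}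
    (hp : pred p ∈ V) : p ∈ I ↔ p ∈ J := by
  simpa [restr, hp] using Set.ext_iff.mp h p

lemma restr_eq_of_subset {W : Set P} {I J : Set A} (hVW : V ⊆ W)
    (h : restr pred W I = restr pred W J) : restr pred V I = restr pred V J := by
  ext p
  by_cases hp : pred p ∈ V
  · simp [restr, hp, mem_iff_of_restr_eq h (hVW hp)]
  · simp [restr, hp]

@[simp]
lemma restr_glue_left (L K : Set A) : restr pred U (glue pred U L K) = restr pred U L := by
  ext p
  by_cases hp : pred p ∈ U <;> simp [glue, restr, hp]

@[simp]
lemma restr_glue_right (L K : Set A) : restr pred Uᶜ (glue pred U L K) = restr pred Uᶜ K := by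
  ext p
  by_cases hp : pred p ∈ U <;> simp [glue, restr, hp]

lemma mem_sigmaSet {M : Set (Set A)} {I : Set A} :
    I ∈ sigmaSet pred U M ↔ ∃ J ∈ M, restr pred U J = restr pred U I := Iff.rfl

lemma mem_oplus {M N : Set (Set A)} {K : Set A} :
    K ∈ oplus pred M N ↔ ∃ I ∈ M, K ∈ N ∧ ¬ ∃ J ∈ N, closerLT pred I J K := by
  simp only [oplus, Set.mem_iUnion, oplusI, Set.mem_ofPred_eq, exists_prop]

lemma semiSaturated.glue_mem {N : Set (Set A)} (hN : semiSaturated pred U N) {L K : Set A}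
    (hL : L ∈ N) (hK : K ∈ N) : glue pred U L K ∈ N :=
  hN _ ⟨L, hL, (restr_glue_left L K).symm⟩ ⟨K, hK, (restr_glue_right L K).symm⟩

lemma seqSaturated.semiSaturated {ι : Type*} {S : ι → Set P}
    (hdisj : Pairwise (Function.onFun Disjoint S)) {N : Set (Set A)}
    (hN : seqSaturated pred S N) (α : ι) : semiSaturated pred (S α) N := by
  rintro I ⟨L, hL, hLI⟩ ⟨K, hK, hKI⟩
  refine hN I fun β => ?_
  rcases eq_or_ne β α with rfl | hβ
  · exact ⟨L, hL, hLI⟩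
  · exact ⟨K, hK, restr_eq_of_subset (Set.subset_compl_iff_disjoint_right.2 (hdisj hβ)) hKI⟩

lemma diffP_congr_of_restr_eq {Q : P} (hQ : Q ∈ V) {I J I₂ J₂ : Set A}
    (hI : restr pred V I = restr pred V I₂) (hJ : restr pred V J = restr pred V J₂) :
    diffP pred Q I J = diffP pred Q I₂ J₂ := by
  ext p
  simp only [diffP, Set.mem_ofPred_eq, Set.mem_symmDiff, and_congr_left_iff]
  rintro rfl
  rw [mem_iff_of_restr_eq hI hQ, mem_iff_of_restr_eq hJ hQ]

lemma diffP_eq_empty_of_restr_eq {Q : P} (hQ : Q ∈ V) {I J : Set A}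
    (h : restr pred V I = restr pred V J) : diffP pred Q I J = ∅ := by
  rw [diffP_congr_of_restr_eq hQ rfl h.symm]
  simp [diffP]

lemma closerLT_of_restr_eq {I J J' I₂ J₂ J₂' : Set A}
    (hI : restr pred V I = restr pred V I₂) (hJ : restr pred V J = restr pred V J₂)
    (hJ' : restr pred V J' = restr pred V J₂') (hoff : restr pred Vᶜ J₂ = restr pred Vᶜ J₂')
    (hle : closerLE pred I J J') (hstrict : ∃ Q ∈ V, ¬ diffP pred Q I J' ⊆ diffP pred Q I J) :
    closerLT pred I₂ J₂ J₂' := by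
  refine ⟨fun Q => ?_, fun hge => ?_⟩
  · by_cases hQ : Q ∈ V
    · rw [← diffP_congr_of_restr_eq hQ hI hJ, ← diffP_congr_of_restr_eq hQ hI hJ']
      exact hle Q
    · rw [diffP_congr_of_restr_eq (V := Vᶜ) hQ rfl hoff]
  · obtain ⟨Q, hQ, hnot⟩ := hstrict
    rw [diffP_congr_of_restr_eq hQ hI hJ, diffP_congr_of_restr_eq hQ hI hJ'] at hnot
    exact hnot (hge Q)

lemma sigmaSet_oplus_subset {M N : Set (Set A)} (hN : semiSaturated pred U N) :
    sigmaSet pred U (oplus pred M N) ⊆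
      oplus pred (sigmaSet pred U M) (sigmaSet pred U N) := by
  intro I hI
  obtain ⟨K, hKop, hKI⟩ := mem_sigmaSet.1 hI
  obtain ⟨I₀, hI₀, hK, hKmin⟩ := mem_oplus.1 hKop
  refine mem_oplus.2 ⟨glue pred U I₀ I, ⟨I₀, hI₀, (restr_glue_left I₀ I).symm⟩, ⟨K, hK, hKI⟩, ?_⟩
  rintro ⟨J, ⟨L, hL, hLJ⟩, hle, hnge⟩
  obtain ⟨Q, hQ⟩ := not_forall.1 hnge
  have hQU : Q ∈ U := by
    by_contra hQU
    rw [diffP_eq_empty_of_restr_eq (V := Uᶜ) hQU (restr_glue_right I₀ I)] at hQ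
    exact hQ (Set.empty_subset _)
  refine hKmin ⟨glue pred U L K, hN.glue_mem hL hK,
    closerLT_of_restr_eq (restr_glue_left I₀ I) (by simpa using hLJ.symm) hKI.symm
      (restr_glue_right L K) hle ⟨Q, hQU, hQ⟩⟩

lemma oplus_sigmaSet_subset {M N : Set (Set A)} (hM : semiSaturated pred U M)
    (hN : semiSaturated pred U N) (hne : (oplus pred M N).Nonempty) :
    oplus pred (sigmaSet pred U M) (sigmaSet pred U N) ⊆
      sigmaSet pred U (oplus pred M N) := by
  intro I hI
  obtain ⟨I₁, ⟨I₀, hI₀, hI₀I₁⟩, ⟨L, hL, hLI⟩, hImin⟩ := mem_oplus.1 hI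
  obtain ⟨K₀, hK₀op⟩ := hne
  obtain ⟨I₀', hI₀', hK₀, hK₀min⟩ := mem_oplus.1 hK₀op
  refine ⟨glue pred U L K₀, mem_oplus.2 ⟨glue pred U I₀ I₀', hM.glue_mem hI₀ hI₀',
    hN.glue_mem hL hK₀, ?_⟩, by simpa using hLI⟩
  rintro ⟨J, hJ, hle, hnge⟩
  obtain ⟨Q, hQ⟩ := not_forall.1 hnge
  by_cases hQU : Q ∈ U
  · exact hImin ⟨glue pred U J I, ⟨J, hJ, (restr_glue_left J I).symm⟩,
      closerLT_of_restr_eq (by simpa using hI₀I₁) (restr_glue_left J I).symm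
        (by simpa using hLI) (restr_glue_right J I) hle ⟨Q, hQU, hQ⟩⟩
  · exact hK₀min ⟨glue pred U K₀ J, hN.glue_mem hK₀ hJ,
      closerLT_of_restr_eq (V := Uᶜ) (restr_glue_right I₀ I₀') (restr_glue_right K₀ J).symm
        (restr_glue_right L K₀) (by simp) hle ⟨Q, hQU, hQ⟩⟩

lemma sigmaSet_oplus {M N : Set (Set A)} (hM : semiSaturated pred U M)
    (hN : semiSaturated pred U N) (hne : (oplus pred M N).Nonempty) :
    sigmaSet pred U (oplus pred M N) = oplus pred (sigmaSet pred U M) (sigmaSet pred U N) :=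
  (sigmaSet_oplus_subset hN).antisymm (oplus_sigmaSet_subset hM hN hne)

end

theorem stmt_19_general {ι : Type*} (pred : A → P) (S : ι → Set P)
    (hdisj : Pairwise (Function.onFun Disjoint S))
    (M N : Set (Set A)) (hM : seqSaturated pred S M) (hN : seqSaturated pred S N)
    (hne : (oplus pred M N).Nonempty) :
    ∀ α, sigmaSet pred (S α) (oplus pred M N) =
      oplus pred (sigmaSet pred (S α) M) (sigmaSet pred (S α) N) := fun α =>
  sigmaSet_oplus (hM.semiSaturated hdisj α) (hN.semiSaturated hdisj α) hne

theorem stmt_19 {ι : Type*} (pred : A → P) (S : ι → Set P)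
    (hdisj : Pairwise (Function.onFun Disjoint S)) (hcov : ⋃ α, S α = Set.univ)
    (M N : Set (Set A)) (hM : seqSaturated pred S M) (hN : seqSaturated pred S N)
    (hne : (oplus pred M N).Nonempty) :
    ∀ α, sigmaSet pred (S α) (oplus pred M N) =
      oplus pred (sigmaSet pred (S α) M) (sigmaSet pred (S α) N) :=
  stmt_19_general pred S hdisj M N hM hN hne
end
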